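/- arXiv:2111.11150 — 8 statements merged into one kernel-verified Lean document; each statement's English description precedes it below -/
import Mathlib

section
/- Let F : ℝ → ℝ be four times continuously differentiable, and define 𝓑(F)(z) = (−(1/2)F''(z) + (3/2)F'(z) + F(z) − 1)·((1/2)F''(z) − (3/2)F'(z) + F(z) − 1) + F'(z)·((1/2)F'''(z) − (3/2)F''(z) + F'(z)). Then for every z ∈ ℝ, the derivative of the function z ↦ 𝓑(F)(z) equals 2F'(z)·((1/4)F''''(z) − (5/4)F''(z) + F(z) − 1). -/
open Real

/-- The quadratic third-order operator
`𝓑(F) = (−(1/2)F'' + (3/2)F' + F − 1)·((1/2)F'' − (3/2)F' + F − 1)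
        + F'·((1/2)F''' − (3/2)F'' + F')`. -/
noncomputable def Bop (F : ℝ → ℝ) (z : ℝ) : ℝ :=
  (-(1/2) * iteratedDeriv 2 F z + (3/2) * deriv F z + F z - 1) *
      ((1/2) * iteratedDeriv 2 F z - (3/2) * deriv F z + F z - 1)
    + deriv F z * ((1/2) * iteratedDeriv 3 F z - (3/2) * iteratedDeriv 2 F z + deriv F z)

theorem ContDiff.hasDerivAt_iteratedDeriv {𝕜 E : Type*} [NontriviallyNormedField 𝕜]
    [NormedAddCommGroup E] [NormedSpace 𝕜 E] {f : 𝕜 → E} {n : WithTop ℕ∞} {m : ℕ}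
    (h : ContDiff 𝕜 n f) (hmn : m < n) (x : 𝕜) :
    HasDerivAt (iteratedDeriv m f) (iteratedDeriv (m + 1) f x) x := by
  rw [iteratedDeriv_succ]
  exact (h.differentiable_iteratedDeriv m hmn x).hasDerivAt

theorem hasDerivAt_Bop {F : ℝ → ℝ} (hF : ContDiff ℝ 4 F) (z : ℝ) :
    HasDerivAt (Bop F)
      (2 * deriv F z *
        ((1/4) * iteratedDeriv 4 F z - (5/4) * iteratedDeriv 2 F z + F z - 1)) z := by
  have d0 : HasDerivAt F (deriv F z) z := by
    simpa only [iteratedDeriv_zero, zero_add, iteratedDeriv_one] using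
      hF.hasDerivAt_iteratedDeriv (m := 0) (by norm_num) z
  have d1 : HasDerivAt (deriv F) (iteratedDeriv 2 F z) z := by
    simpa only [iteratedDeriv_one] using hF.hasDerivAt_iteratedDeriv (m := 1) (by norm_num) z
  have d2 := hF.hasDerivAt_iteratedDeriv (m := 2) (by norm_num) z
  have d3 := hF.hasDerivAt_iteratedDeriv (m := 3) (by norm_num) z
  have hB := ((((d2.const_mul (-(1/2))).add (d1.const_mul (3/2))).add d0).sub_const 1).mul
      ((((d2.const_mul (1/2)).sub (d1.const_mul (3/2))).add d0).sub_const 1)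
    |>.add (d1.mul (((d3.const_mul (1/2)).sub (d2.const_mul (3/2))).add d1))
  refine hB.congr_deriv ?_
  simp only [Pi.add_apply, Pi.sub_apply]
  ring

/-- `𝓑(F)' = 2F'·((1/4)F'''' − (5/4)F'' + F − 1)`, i.e. `𝓑` is a first
integral of the operator `F ↦ ℒ⁺(ℒ⁻F) − 1`. -/
theorem deriv_Bop (F : ℝ → ℝ) (hF : ContDiff ℝ 4 F) (z : ℝ) :
    deriv (Bop F) z =
      2 * deriv F z *
        ((1/4) * iteratedDeriv 4 F z - (5/4) * iteratedDeriv 2 F z + F z - 1) :=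
  (hasDerivAt_Bop hF z).deriv
end

section
/- Let C₁, C₂, C₃, C₄ ∈ ℝ and let F(z) = 1 + (1/2)C₁e^{−2z} + C₂e^{−z} + C₃e^{z} + (1/2)C₄e^{2z}. Then 𝓑(F)(z) = 3(C₂C₃ − C₁C₄) for every z ∈ ℝ. -/
open Real

/-! Writing `F = 1 + G`, the derivatives of `G = a e^{-2w} + b e^{-w} + c e^w + d e^{2w}` only rescale
its coefficients, so `𝓑(F)` is a Laurent polynomial in `e^z`; all its non-constant terms cancel. -/

theorem Bop_one_add (G : ℝ → ℝ) (z : ℝ) :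
    Bop (fun w => 1 + G w) z =
      (-(1/2) * iteratedDeriv 2 G z + (3/2) * deriv G z + G z) *
          ((1/2) * iteratedDeriv 2 G z - (3/2) * deriv G z + G z)
        + deriv G z * ((1/2) * iteratedDeriv 3 G z - (3/2) * iteratedDeriv 2 G z + deriv G z) := by
  simp only [Bop, iteratedDeriv_const_add two_pos, iteratedDeriv_const_add three_pos,
    deriv_const_add]
  ring

noncomputable def expLaurent (a b c d : ℝ) (w : ℝ) : ℝ :=
  a * exp (-2*w) + b * exp (-w) + c * exp w + d * exp (2*w)

theorem hasDerivAt_expLaurent (a b c d z : ℝ) :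
    HasDerivAt (expLaurent a b c d) (expLaurent (-2*a) (-b) c (2*d) z) z := by
  have hexp (k : ℝ) : HasDerivAt (fun w => exp (k*w)) (k * exp (k*z)) z := by
    simpa [mul_comm] using ((hasDerivAt_id z).const_mul k).exp
  have hsum := ((((hexp (-2)).const_mul a).fun_add ((hexp (-1)).const_mul b)).fun_add
    ((hexp 1).const_mul c)).fun_add ((hexp 2).const_mul d)
  simp only [neg_one_mul, one_mul] at hsum
  exact hsum.congr_deriv (by simp only [expLaurent]; ring)

theorem deriv_expLaurent (a b c d : ℝ) :
    deriv (expLaurent a b c d) = expLaurent (-2*a) (-b) c (2*d) :=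
  funext fun z => (hasDerivAt_expLaurent a b c d z).deriv

theorem iteratedDeriv_expLaurent (n : ℕ) (a b c d : ℝ) :
    iteratedDeriv n (expLaurent a b c d) =
      expLaurent ((-2)^n * a) ((-1)^n * b) c (2^n * d) := by
  induction n generalizing a b d with
  | zero => simp
  | succ n ih =>
    rw [iteratedDeriv_succ', deriv_expLaurent, ih]
    congr 1 <;> ring

theorem expLaurent_eq (a b c d z : ℝ) :
    expLaurent a b c d z = a * (exp z)⁻¹ ^ 2 + b * (exp z)⁻¹ + c * exp z + d * exp z ^ 2 := by
  simp only [expLaurent, ← exp_neg, ← exp_nat_mul]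
  ring_nf

/-- for `F(z) = 1 + (1/2)C₁e^{−2z} + C₂e^{−z} + C₃eᶻ + (1/2)C₄e^{2z}` one has
`𝓑(F)(z) = 3(C₂C₃ − C₁C₄)` for every `z`. -/
theorem Bop_of_extremal_solution (C₁ C₂ C₃ C₄ : ℝ) (z : ℝ) :
    Bop (fun w => 1 + (1/2) * C₁ * exp (-2*w) + C₂ * exp (-w)
      + C₃ * exp w + (1/2) * C₄ * exp (2*w)) z = 3 * (C₂ * C₃ - C₁ * C₄) := by
  have hF : (fun w => 1 + (1/2) * C₁ * exp (-2*w) + C₂ * exp (-w)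
      + C₃ * exp w + (1/2) * C₄ * exp (2*w)) = fun w => 1 + expLaurent (C₁/2) C₂ C₃ (C₄/2) w := by
    ext w; simp only [expLaurent]; ring
  rw [hF, Bop_one_add, ← iteratedDeriv_one, iteratedDeriv_expLaurent, iteratedDeriv_expLaurent,
    iteratedDeriv_expLaurent]
  simp only [expLaurent_eq]
  field_simp
  ring
end

section
/- Let F : ℝ → ℝ be four times continuously differentiable. Then F satisfies both (1/4)F''''(z) − (5/4)F''(z) + F(z) = 1 and 𝓑(F)(z) = 0 for all z ∈ ℝ if and only if there exist constants C₁, C₂, C₃, C₄ ∈ ℝ with C₁C₄ − C₂C₃ = 0 such that F(z) = 1 + (1/2)C₁e^{−2z} + C₂e^{−z} + C₃e^{z} + (1/2)C₄e^{2z} for all z ∈ ℝ. -/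
/-!
The linear equation `F'''' - 5F'' + 4F = 4` has characteristic roots `±1, ±2`, so its solutions
are `F = 1 + a e^{-2z} + b e^{-z} + c e^z + d e^{2z}`. On this family `𝓑(F)` is the constant
`3(bc - 4ad)`, and with `C₁ = 2a, C₂ = b, C₃ = c, C₄ = 2d` its vanishing is `C₁C₄ = C₂C₃`.
-/

open Real

theorem eq_mul_exp_of_hasDerivAt {f : ℝ → ℝ} {c : ℝ} (hf : ∀ z, HasDerivAt f (c * f z) z)
    (z : ℝ) : f z = f 0 * exp (c * z) := by
  have hconst : ∀ z, HasDerivAt (fun z => f z * exp (-(c * z))) 0 z := fun z =>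
    ((hf z).mul ((hasDerivAt_id z).const_mul c).neg.exp).congr_deriv (by ring)
  have key := is_const_of_deriv_eq_zero (fun z => (hconst z).differentiableAt)
    (fun z => (hconst z).deriv) z 0
  simp only [mul_zero, neg_zero, exp_zero, mul_one] at key
  rw [← key, mul_assoc, ← exp_add, neg_add_cancel, exp_zero, mul_one]

/-- `f' + k f` and `f' - k f` solve first-order equations, and `f` is their difference over `2k`. -/
theorem exists_eq_exp_add_exp_of_hasDerivAt {f f' : ℝ → ℝ} {k : ℝ} (hk : k ≠ 0)
    (hf : ∀ z, HasDerivAt f (f' z) z) (hf' : ∀ z, HasDerivAt f' (k ^ 2 * f z) z) :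
    ∃ A B : ℝ, ∀ z, f z = A * exp (k * z) + B * exp (-k * z) := by
  have hu : ∀ z, HasDerivAt (fun z => f' z + k * f z) (k * (f' z + k * f z)) z := fun z =>
    ((hf' z).add ((hf z).const_mul k)).congr_deriv (by ring)
  have hv : ∀ z, HasDerivAt (fun z => f' z - k * f z) (-k * (f' z - k * f z)) z := fun z =>
    ((hf' z).sub ((hf z).const_mul k)).congr_deriv (by ring)
  refine ⟨(f' 0 + k * f 0) / (2 * k), -(f' 0 - k * f 0) / (2 * k), fun z => ?_⟩
  have hu_z := eq_mul_exp_of_hasDerivAt hu z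
  have hv_z := eq_mul_exp_of_hasDerivAt hv z
  rw [div_mul_eq_mul_div, div_mul_eq_mul_div, ← add_div, eq_div_iff (mul_ne_zero two_ne_zero hk)]
  linear_combination hu_z - hv_z

noncomputable def expCombination (a b c d : ℝ) (z : ℝ) : ℝ :=
  a * exp (-2 * z) + b * exp (-z) + c * exp z + d * exp (2 * z)

/-- `(D² - 1)F` solves `g'' = 4g`, `(D² - 4)F` solves `w'' = w`, and
`3F = (D² - 1)F - (D² - 4)F`. -/
theorem exists_eq_expCombination_of_hasDerivAt {F F₁ F₂ F₃ F₄ : ℝ → ℝ}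
    (h₁ : ∀ z, HasDerivAt F (F₁ z) z) (h₂ : ∀ z, HasDerivAt F₁ (F₂ z) z)
    (h₃ : ∀ z, HasDerivAt F₂ (F₃ z) z) (h₄ : ∀ z, HasDerivAt F₃ (F₄ z) z)
    (hode : ∀ z, F₄ z - 5 * F₂ z + 4 * F z = 0) :
    ∃ a b c d : ℝ, F = expCombination a b c d := by
  obtain ⟨A, B, hg⟩ := exists_eq_exp_add_exp_of_hasDerivAt (f := fun z => F₂ z - F z)
    (k := 2) two_ne_zero (fun z => (h₃ z).sub (h₁ z))
    (fun z => ((h₄ z).sub (h₂ z)).congr_deriv (by linear_combination hode z))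
  obtain ⟨P, Q, hw⟩ := exists_eq_exp_add_exp_of_hasDerivAt (f := fun z => F₂ z - 4 * F z)
    (k := 1) one_ne_zero (fun z => (h₃ z).sub ((h₁ z).const_mul 4))
    (fun z => ((h₄ z).sub ((h₂ z).const_mul 4)).congr_deriv (by linear_combination hode z))
  refine ⟨B / 3, -Q / 3, -P / 3, A / 3, funext fun z => ?_⟩
  have hg_z := hg z
  have hw_z := hw z
  simp only [one_mul, neg_one_mul] at hw_z
  simp only [expCombination]
  linear_combination (hg_z - hw_z) / 3

theorem hasDerivAt_expCombination (a b c d z : ℝ) :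
    HasDerivAt (expCombination a b c d) (expCombination (-2 * a) (-b) c (2 * d) z) z := by
  have h₁ := ((hasDerivAt_id z).const_mul (-2 : ℝ)).exp.const_mul a
  have h₂ := (hasDerivAt_id z).neg.exp.const_mul b
  have h₃ := (hasDerivAt_exp z).const_mul c
  have h₄ := ((hasDerivAt_id z).const_mul (2 : ℝ)).exp.const_mul d
  refine (((h₁.add h₂).add h₃).add h₄).congr_deriv ?_
  simp only [expCombination, id, Pi.neg_apply]
  ring

theorem deriv_expCombination (a b c d : ℝ) :
    deriv (expCombination a b c d) = expCombination (-2 * a) (-b) c (2 * d) :=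
  funext fun z => (hasDerivAt_expCombination a b c d z).deriv

theorem iteratedDeriv_expCombination (a b c d : ℝ) (n : ℕ) :
    iteratedDeriv n (expCombination a b c d)
      = expCombination ((-2) ^ n * a) ((-1) ^ n * b) c (2 ^ n * d) := by
  induction n with
  | zero => simp
  | succ n ih =>
    rw [iteratedDeriv_succ, ih, deriv_expCombination]
    congr 1 <;> ring

theorem iteratedDeriv_const_add_expCombination (a b c d : ℝ) {n : ℕ} (hn : 0 < n) (z : ℝ) :
    iteratedDeriv n (fun z => 1 + expCombination a b c d z) z
      = expCombination ((-2) ^ n * a) ((-1) ^ n * b) c (2 ^ n * d) z := by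
  rw [iteratedDeriv_const_add hn, iteratedDeriv_expCombination]

theorem linearODE_const_add_expCombination (a b c d z : ℝ) :
    (1/4) * iteratedDeriv 4 (fun z => 1 + expCombination a b c d z) z
      - (5/4) * iteratedDeriv 2 (fun z => 1 + expCombination a b c d z) z
      + (1 + expCombination a b c d z) = 1 := by
  rw [iteratedDeriv_const_add_expCombination _ _ _ _ (by norm_num),
    iteratedDeriv_const_add_expCombination _ _ _ _ (by norm_num)]
  simp only [expCombination]
  ring

theorem bop_const_add_expCombination (a b c d z : ℝ) :
    Bop (fun z => 1 + expCombination a b c d z) z = 3 * (b * c - 4 * a * d) := by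
  rw [Bop, ← iteratedDeriv_one, iteratedDeriv_const_add_expCombination _ _ _ _ (by norm_num),
    iteratedDeriv_const_add_expCombination _ _ _ _ (by norm_num),
    iteratedDeriv_const_add_expCombination _ _ _ _ (by norm_num)]
  have h₂ : exp (2 * z) = exp z ^ 2 := by rw [← exp_nat_mul]; norm_num
  have hneg₂ : exp (-2 * z) = exp (-z) ^ 2 := by rw [← exp_nat_mul]; ring_nf
  have hinv : exp (-z) * exp z = 1 := by rw [← exp_add, neg_add_cancel, exp_zero]
  simp only [expCombination, h₂, hneg₂]
  linear_combination (3 * b * c - 12 * a * d * (exp (-z) * exp z + 1)) * hinv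

theorem exists_eq_const_add_expCombination {F : ℝ → ℝ} (hF : ContDiff ℝ 4 F)
    (hode : ∀ z, (1/4) * iteratedDeriv 4 F z - (5/4) * iteratedDeriv 2 F z + F z = 1) :
    ∃ a b c d : ℝ, F = fun z => 1 + expCombination a b c d z := by
  have hd (m : ℕ) (hm : m < 4) (z : ℝ) :
      HasDerivAt (iteratedDeriv m F) (iteratedDeriv (m + 1) F z) z := by
    rw [iteratedDeriv_succ]
    exact (hF.differentiable_iteratedDeriv m (by exact_mod_cast hm) z).hasDerivAt
  obtain ⟨a, b, c, d, h⟩ := exists_eq_expCombination_of_hasDerivAt (F := fun z => F z - 1)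
    (fun z => by simpa using (hd 0 (by norm_num) z).sub_const 1)
    (hd 1 (by norm_num)) (hd 2 (by norm_num)) (hd 3 (by norm_num))
    (fun z => by linear_combination 4 * hode z)
  exact ⟨a, b, c, d, funext fun z => by rw [← congrFun h z]; ring⟩

/-- `F` satisfies both `(1/4)F'''' − (5/4)F'' + F = 1` and `𝓑(F) = 0` on `ℝ`
iff `F(z) = 1 + (1/2)C₁e^{−2z} + C₂e^{−z} + C₃eᶻ + (1/2)C₄e^{2z}` with `C₁C₄ − C₂C₃ = 0`. -/
theorem bachFlat_iff (F : ℝ → ℝ) (hF : ContDiff ℝ 4 F) :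
    ((∀ z : ℝ, (1/4) * iteratedDeriv 4 F z - (5/4) * iteratedDeriv 2 F z + F z = 1) ∧
      (∀ z : ℝ, Bop F z = 0)) ↔
    (∃ C₁ C₂ C₃ C₄ : ℝ, C₁ * C₄ - C₂ * C₃ = 0 ∧
      ∀ z : ℝ, F z = 1 + (1/2) * C₁ * exp (-2*z) + C₂ * exp (-z)
        + C₃ * exp z + (1/2) * C₄ * exp (2*z)) := by
  constructor
  · rintro ⟨hode, hbop⟩
    obtain ⟨a, b, c, d, rfl⟩ := exists_eq_const_add_expCombination hF hode
    have hbc : b * c - 4 * a * d = 0 := by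
      linarith [bop_const_add_expCombination a b c d 0, hbop 0]
    refine ⟨2 * a, b, c, 2 * d, by linear_combination -hbc, fun z => ?_⟩
    simp only [expCombination]
    ring
  · rintro ⟨C₁, C₂, C₃, C₄, hC, hF_eq⟩
    obtain rfl : F = fun z => 1 + expCombination (C₁ / 2) C₂ C₃ (C₄ / 2) z := by
      funext z
      rw [hF_eq, expCombination]
      ring
    refine ⟨linearODE_const_add_expCombination _ _ _ _, fun z => ?_⟩
    rw [bop_const_add_expCombination]
    linear_combination -3 * hC
end

section
/- Let I ⊆ ℝ be an open interval and let F, C : ℝ → ℝ be differentiable on I with F(z) > 0 and C(z) > 0 for all z ∈ I. Suppose that for all z ∈ I, (d/dz)√(F(z)) = √(F(z)) − 1 and C'(z)/C(z) = −1 + 2/√(F(z)). Then there exist constants C₀ > 0 and C₁ ∈ ℝ such that for all z ∈ I, 1 + C₁e^{z} > 0, F(z) = (1 + C₁e^{z})², and C(z) = C₀e^{z}/(1 + C₁e^{z})². -/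
/-! With `s = √F` the two equations read `(s - 1)' = s - 1` and `(C s²)' = C s²`, so on the
interval both `s - 1` and `C s²` are constant multiples of `eᶻ`. -/

open Real

-- `f e⁻ᶻ` has derivative zero, hence is constant on the convex set `I`.
theorem IsPreconnected.eq_mul_exp_sub_of_hasDerivAt_self {I : Set ℝ} (hI : IsPreconnected I)
    {f : ℝ → ℝ} (hf : ∀ z ∈ I, HasDerivAt f (f z) z) {z₀ z : ℝ} (hz₀ : z₀ ∈ I) (hz : z ∈ I) :
    f z = f z₀ * exp (z - z₀) := by
  have hg : ∀ w ∈ I, HasDerivWithinAt (fun w => f w * exp (-w)) 0 I w := fun w hw => by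
    have := (hf w hw).mul ((hasDerivAt_neg w).exp)
    exact (this.congr_deriv (by ring)).hasDerivWithinAt
  have hconst := hI.ordConnected.convex.norm_image_sub_le_of_norm_hasDerivWithin_le hg
    (C := 0) (fun _ _ => norm_zero.le) hz₀ hz
  rw [zero_mul, norm_le_zero_iff, sub_eq_zero] at hconst
  calc f z = f z * exp (-z) * exp z := by
        rw [mul_assoc, ← exp_add, neg_add_cancel, exp_zero, mul_one]
    _ = f z₀ * exp (z - z₀) := by rw [hconst, mul_assoc, ← exp_add, neg_add_eq_sub]

theorem hasDerivAt_mul_of_deriv_div_eq {f : ℝ → ℝ} {z a : ℝ} (hf : DifferentiableAt ℝ f z)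
    (hfz : f z ≠ 0) (h : deriv f z / f z = a) : HasDerivAt f (f z * a) z := by
  rw [← h, mul_div_cancel₀ _ hfz]
  exact hf.hasDerivAt

theorem hasDerivAt_mul_sq_of_hasDerivAt {s C : ℝ → ℝ} {z : ℝ} (hs : HasDerivAt s (s z - 1) z)
    (hC : HasDerivAt C (C z * (-1 + 2 / s z)) z) (hsz : s z ≠ 0) :
    HasDerivAt (fun w => C w * s w ^ 2) (C z * s z ^ 2) z := by
  refine (hC.mul (hs.pow 2)).congr_deriv ?_
  simp only [Pi.pow_apply]
  field_simp
  ring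

theorem hyperKahler_ode_solution_general (I : Set ℝ)
    (hIconn : IsPreconnected I) (F C : ℝ → ℝ)
    (hF : ∀ z ∈ I, DifferentiableAt ℝ F z) (hC : ∀ z ∈ I, DifferentiableAt ℝ C z)
    (hFpos : ∀ z ∈ I, 0 < F z) (hCpos : ∀ z ∈ I, 0 < C z)
    (h1 : ∀ z ∈ I, deriv (fun w => Real.sqrt (F w)) z = Real.sqrt (F z) - 1)
    (h2 : ∀ z ∈ I, deriv C z / C z = -1 + 2 / Real.sqrt (F z)) :
    ∃ C₀ C₁ : ℝ, 0 < C₀ ∧ ∀ z ∈ I,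
      0 < 1 + C₁ * exp z ∧
      F z = (1 + C₁ * exp z)^2 ∧
      C z = C₀ * exp z / (1 + C₁ * exp z)^2 := by
  rcases I.eq_empty_or_nonempty with rfl | ⟨z₀, hz₀⟩
  · exact ⟨1, 0, one_pos, fun z hz => hz.elim⟩
  set s : ℝ → ℝ := fun w => √(F w)
  have hs_pos : ∀ z ∈ I, 0 < s z := fun z hz => sqrt_pos.2 (hFpos z hz)
  have hs : ∀ z ∈ I, HasDerivAt s (s z - 1) z := fun z hz =>
    h1 z hz ▸ ((hF z hz).sqrt (hFpos z hz).ne').hasDerivAt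
  have hs_eq : ∀ z ∈ I, s z - 1 = (s z₀ - 1) * exp (z - z₀) := fun z hz =>
    hIconn.eq_mul_exp_sub_of_hasDerivAt_self (f := fun w => s w - 1)
      (fun w hw => (hs w hw).sub_const 1) hz₀ hz
  have hCs_eq : ∀ z ∈ I, C z * s z ^ 2 = C z₀ * s z₀ ^ 2 * exp (z - z₀) := fun z hz =>
    hIconn.eq_mul_exp_sub_of_hasDerivAt_self (f := fun w => C w * s w ^ 2)
      (fun w hw => hasDerivAt_mul_sq_of_hasDerivAt (hs w hw)
        (hasDerivAt_mul_of_deriv_div_eq (hC w hw) (hCpos w hw).ne' (h2 w hw)) (hs_pos w hw).ne')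
      hz₀ hz
  refine ⟨C z₀ * s z₀ ^ 2 * exp (-z₀), (s z₀ - 1) * exp (-z₀),
    by have := hCpos z₀ hz₀; have := hs_pos z₀ hz₀; positivity, fun z hz => ?_⟩
  have hexp : exp (z - z₀) = exp (-z₀) * exp z := by rw [← exp_add, neg_add_eq_sub]
  have hsz : 1 + (s z₀ - 1) * exp (-z₀) * exp z = s z := by
    rw [mul_assoc, ← hexp, ← hs_eq z hz]; ring
  rw [hsz, mul_assoc, ← hexp, ← hCs_eq z hz,
    mul_div_cancel_right₀ _ (pow_ne_zero 2 (hs_pos z hz).ne')]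
  exact ⟨hs_pos z hz, (sq_sqrt (hFpos z hz).le).symm, rfl⟩

/-- on an open interval where `F, C > 0` are differentiable and satisfy
`(√F)' = √F − 1` and `C'/C = −1 + 2/√F`, there are constants `C₀ > 0` and `C₁` with
`1 + C₁eᶻ > 0`, `F = (1 + C₁eᶻ)²` and `C = C₀eᶻ/(1 + C₁eᶻ)²` on the interval. -/
theorem hyperKahler_ode_solution (I : Set ℝ) (hIopen : IsOpen I)
    (hIconn : IsPreconnected I) (F C : ℝ → ℝ)
    (hF : ∀ z ∈ I, DifferentiableAt ℝ F z) (hC : ∀ z ∈ I, DifferentiableAt ℝ C z)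
    (hFpos : ∀ z ∈ I, 0 < F z) (hCpos : ∀ z ∈ I, 0 < C z)
    (h1 : ∀ z ∈ I, deriv (fun w => Real.sqrt (F w)) z = Real.sqrt (F z) - 1)
    (h2 : ∀ z ∈ I, deriv C z / C z = -1 + 2 / Real.sqrt (F z)) :
    ∃ C₀ C₁ : ℝ, 0 < C₀ ∧ ∀ z ∈ I,
      0 < 1 + C₁ * exp z ∧
      F z = (1 + C₁ * exp z)^2 ∧
      C z = C₀ * exp z / (1 + C₁ * exp z)^2 :=
  hyperKahler_ode_solution_general I hIconn F C hF hC hFpos hCpos h1 h2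
end

section
/- Let I ⊆ ℝ be an open interval and let F, C : ℝ → ℝ be twice continuously differentiable on I with C(z) > 0 for all z ∈ I. Suppose that for all z ∈ I, (d²/dz²)(C(z)^{−1/2}) = (1/4)C(z)^{−1/2} and C(z)^{1/2}·(d/dz)(F(z)·(d/dz)C(z)^{−1/2}) = (1/2)F''(z) − (3/4)F(z) + 1. Then there exist constants C₁, C₂, C₃, C₄, C₅, C₆ ∈ ℝ with C₁C₅ − C₂C₆ = 0 and C₃C₅ − C₄C₆ = 0 such that for all z ∈ I, F(z) = 1 + (1/2)C₁e^{−2z} + C₂e^{−z} + C₃e^{z} + (1/2)C₄e^{2z} and C(z) = e^{−z}/(C₅ + C₆e^{−z})². -/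
/-!
Write `g = C^{-1/2}`. The first equation is `g'' = g/4`, so `g = e^{-z/2}(C₅eᶻ + C₆)`, which is
the formula for `C = g⁻²`. As `(F g')' = F'g' + Fg/4`, the second equation is the linear equation
`H'' = (2g'/g) H' + 2H` for `H = F - 1`. Its coefficient is explicit, and so are two solutions,
`C₆eᶻ + (C₅/2)e^{2z}` and `(C₆/2)e^{-2z} + C₅e^{-z}`, whose Wronskian `-(3/2)g²` does not vanish.
By Abel's identity a Wronskian quotient of two solutions is constant, so `H` is a combination of
these two; their coefficient vectors are proportional to `(C₆, C₅)`, which gives the constraints.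
-/

open Real

lemma hasDerivAt_exp_const_mul (c z : ℝ) :
    HasDerivAt (fun w => exp (c * w)) (c * exp (c * z)) z := by
  simpa [mul_comm] using ((hasDerivAt_id z).const_mul c).exp

lemma ContDiffOn.hasDerivAt_deriv {f : ℝ → ℝ} {s : Set ℝ} {n : WithTop ℕ∞}
    (hf : ContDiffOn ℝ n f s) (hn : n ≠ 0) (hs : IsOpen s) {z : ℝ} (hz : z ∈ s) :
    HasDerivAt f (deriv f z) z :=
  ((hf.differentiableOn hn).differentiableAt (hs.mem_nhds hz)).hasDerivAt

lemma IsOpen.exists_eq_const_of_hasDerivAt_zero {I : Set ℝ} (hI : IsOpen I)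
    (hI' : IsPreconnected I) {f : ℝ → ℝ} (hf : ∀ z ∈ I, HasDerivAt f 0 z) :
    ∃ a, ∀ z ∈ I, f z = a :=
  hI.exists_is_const_of_deriv_eq_zero hI'
    (fun z hz => (hf z hz).differentiableAt.differentiableWithinAt) (fun z hz => (hf z hz).deriv)

lemma hasDerivAt_div_eq_zero_of_hasDerivAt_mul_self {N D : ℝ → ℝ} {r z : ℝ}
    (hN : HasDerivAt N (r * N z) z) (hD : HasDerivAt D (r * D z) z) (hDz : D z ≠ 0) :
    HasDerivAt (fun w => N w / D w) 0 z :=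
  (hN.div hD hDz).congr_deriv (by ring)

section SecondOrderLinear

variable {I : Set ℝ} {p q u u' v v' y y' : ℝ → ℝ}

lemma hasDerivAt_wronskian {z : ℝ} (hu : HasDerivAt u (u' z) z)
    (hu' : HasDerivAt u' (p z * u' z + q z * u z) z) (hv : HasDerivAt v (v' z) z)
    (hv' : HasDerivAt v' (p z * v' z + q z * v z) z) :
    HasDerivAt (fun w => u w * v' w - u' w * v w) (p z * (u z * v' z - u' z * v z)) z :=
  ((hu.mul hv').sub (hu'.mul hv)).congr_deriv (by ring)

theorem exists_eq_linear_combination_of_wronskian_ne_zero (hI : IsOpen I)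
    (hI' : IsPreconnected I)
    (hu : ∀ z ∈ I, HasDerivAt u (u' z) z)
    (hu' : ∀ z ∈ I, HasDerivAt u' (p z * u' z + q z * u z) z)
    (hv : ∀ z ∈ I, HasDerivAt v (v' z) z)
    (hv' : ∀ z ∈ I, HasDerivAt v' (p z * v' z + q z * v z) z)
    (hy : ∀ z ∈ I, HasDerivAt y (y' z) z)
    (hy' : ∀ z ∈ I, HasDerivAt y' (p z * y' z + q z * y z) z)
    (hW : ∀ z ∈ I, u z * v' z - u' z * v z ≠ 0) :
    ∃ a b : ℝ, ∀ z ∈ I, y z = a * u z + b * v z ∧ y' z = a * u' z + b * v' z := by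
  have hWuv z (hz : z ∈ I) := hasDerivAt_wronskian (hu z hz) (hu' z hz) (hv z hz) (hv' z hz)
  obtain ⟨a, ha⟩ := hI.exists_eq_const_of_hasDerivAt_zero hI' fun z hz =>
    hasDerivAt_div_eq_zero_of_hasDerivAt_mul_self
      (hasDerivAt_wronskian (hy z hz) (hy' z hz) (hv z hz) (hv' z hz)) (hWuv z hz) (hW z hz)
  obtain ⟨b, hb⟩ := hI.exists_eq_const_of_hasDerivAt_zero hI' fun z hz =>
    hasDerivAt_div_eq_zero_of_hasDerivAt_mul_self
      (hasDerivAt_wronskian (hu z hz) (hu' z hz) (hy z hz) (hy' z hz)) (hWuv z hz) (hW z hz)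
  refine ⟨a, b, fun z hz => ?_⟩
  have hA := (div_eq_iff (hW z hz)).1 (ha z hz)
  have hB := (div_eq_iff (hW z hz)).1 (hb z hz)
  constructor <;> apply mul_right_cancel₀ (hW z hz)
  · linear_combination u z * hA + v z * hB
  · linear_combination u' z * hA + v' z * hB

theorem exists_eq_exp_add_exp_of_hasDerivAt_s8 (hI : IsOpen I) (hI' : IsPreconnected I) {c : ℝ}
    (hc : c ≠ 0) (hy : ∀ z ∈ I, HasDerivAt y (y' z) z)
    (hy' : ∀ z ∈ I, HasDerivAt y' (c ^ 2 * y z) z) :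
    ∃ a b : ℝ, ∀ z ∈ I, y z = a * exp (c * z) + b * exp (-c * z) ∧
      y' z = c * (a * exp (c * z) - b * exp (-c * z)) := by
  have hexp (c z : ℝ) : HasDerivAt (fun w => c * exp (c * w))
      (0 * (c * exp (c * z)) + c ^ 2 * exp (c * z)) z :=
    ((hasDerivAt_exp_const_mul c z).const_mul c).congr_deriv (by ring)
  obtain ⟨a, b, h⟩ := exists_eq_linear_combination_of_wronskian_ne_zero (p := fun _ => 0)
    (q := fun _ => c ^ 2) hI hI' (fun z _ => hasDerivAt_exp_const_mul c z) (fun z _ => hexp c z)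
    (fun z _ => hasDerivAt_exp_const_mul (-c) z) (fun z _ => by simpa using hexp (-c) z) hy
    (fun z hz => by simpa using hy' z hz) fun z _ => by
      have hprod : exp (c * z) * exp (-c * z) = 1 := by rw [← exp_add]; simp
      have hW : exp (c * z) * (-c * exp (-c * z)) - c * exp (c * z) * exp (-c * z) = -2 * c := by
        linear_combination (-2 * c) * hprod
      rw [hW]
      simpa using hc
  exact ⟨a, b, fun z hz => ⟨(h z hz).1, by linear_combination (h z hz).2⟩⟩

theorem exists_eq_exp_neg_half_mul_of_hasDerivAt (hI : IsOpen I) (hI' : IsPreconnected I)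
    (hy : ∀ z ∈ I, HasDerivAt y (y' z) z) (hy' : ∀ z ∈ I, HasDerivAt y' (1 / 4 * y z) z) :
    ∃ A B : ℝ, ∀ z ∈ I, y z = exp (-(1 / 2) * z) * (A * exp z + B) ∧
      y' z = exp (-(1 / 2) * z) * (A * exp z - B) / 2 := by
  obtain ⟨A, B, h⟩ := exists_eq_exp_add_exp_of_hasDerivAt_s8 hI hI' (c := 1 / 2) (by norm_num) hy
    (fun z hz => by simpa only [one_div, inv_pow, show (2 : ℝ) ^ 2 = 4 by norm_num] using hy' z hz)
  refine ⟨A, B, fun z hz => ?_⟩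
  have hE : exp (1 / 2 * z) = exp (-(1 / 2) * z) * exp z := by rw [← exp_add]; ring_nf
  exact ⟨by linear_combination (h z hz).1 + A * hE, by linear_combination (h z hz).2 + A / 2 * hE⟩

/- For `g = e^{-z/2}(A eᶻ + B)` the coefficient `2g'/g` of the second Einstein equation is
`(A eᶻ - B)/(A eᶻ + B)`. -/
theorem exists_eq_exp_combination_of_hasDerivAt (hI : IsOpen I) (hI' : IsPreconnected I)
    {A B : ℝ} (hD : ∀ z ∈ I, A * exp z + B ≠ 0) (hy : ∀ z ∈ I, HasDerivAt y (y' z) z)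
    (hy' : ∀ z ∈ I, HasDerivAt y' ((A * exp z - B) / (A * exp z + B) * y' z + 2 * y z) z) :
    ∃ a b : ℝ, ∀ z ∈ I, y z =
      a * (B * exp z + A / 2 * exp (2 * z)) + b * (B / 2 * exp (-2 * z) + A * exp (-z)) := by
  have e1 := Real.hasDerivAt_exp
  have e2 := hasDerivAt_exp_const_mul 2
  have em1 (z : ℝ) := (hasDerivAt_neg z).exp
  have em2 := hasDerivAt_exp_const_mul (-2)
  have hsq (z : ℝ) : exp (2 * z) = exp z ^ 2 := by rw [← exp_nat_mul]; norm_num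
  have hsq' (z : ℝ) : exp (-2 * z) = (exp z ^ 2)⁻¹ := by rw [← hsq, ← exp_neg]; ring_nf
  obtain ⟨a, b, h⟩ := exists_eq_linear_combination_of_wronskian_ne_zero
    (p := fun z => (A * exp z - B) / (A * exp z + B)) (q := fun _ => 2)
    (u := fun z => B * exp z + A / 2 * exp (2 * z)) (u' := fun z => B * exp z + A * exp (2 * z))
    (v := fun z => B / 2 * exp (-2 * z) + A * exp (-z))
    (v' := fun z => -(B * exp (-2 * z) + A * exp (-z))) hI hI'
    (fun z _ => (((e1 z).const_mul B).add ((e2 z).const_mul (A / 2))).congr_deriv (by ring))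
    (fun z hz => (((e1 z).const_mul B).add ((e2 z).const_mul A)).congr_deriv (by
      have hp : (A * exp z - B) / (A * exp z + B) * (B * exp z + A * exp z ^ 2)
          = exp z * (A * exp z - B) := by
        rw [div_mul_eq_mul_div, div_eq_iff (hD z hz)]; ring
      simp only [hsq]
      linear_combination -hp))
    (fun z _ => (((em2 z).const_mul (B / 2)).add ((em1 z).const_mul A)).congr_deriv (by ring))
    (fun z hz => (((em2 z).const_mul B).add ((em1 z).const_mul A)).neg.congr_deriv (by
      have hp : (A * exp z - B) / (A * exp z + B) * -(B * (exp z ^ 2)⁻¹ + A * (exp z)⁻¹)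
          = B * (exp z ^ 2)⁻¹ - A * (exp z)⁻¹ := by
        rw [div_mul_eq_mul_div, div_eq_iff (hD z hz)]; field_simp; ring
      simp only [hsq', exp_neg]
      linear_combination -hp))
    hy hy' fun z hz => by
      have hW : (B * exp z + A / 2 * exp (2 * z)) * -(B * exp (-2 * z) + A * exp (-z))
          - (B * exp z + A * exp (2 * z)) * (B / 2 * exp (-2 * z) + A * exp (-z))
          = -(3 / 2) * (exp z)⁻¹ * (A * exp z + B) ^ 2 := by
        simp only [hsq, hsq', exp_neg]; field_simp; ring
      rw [hW]
      have := hD z hz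
      positivity
  exact ⟨a, b, fun z hz => (h z hz).1⟩

end SecondOrderLinear

lemma inv_sq_exp_neg_half_mul {A B z : ℝ} (hD : A * exp z + B ≠ 0) :
    (exp (-(1 / 2) * z) * (A * exp z + B))⁻¹ ^ 2 = exp (-z) / (A + B * exp (-z)) ^ 2 := by
  have hE : exp (-(1 / 2) * z) ^ 2 = exp (-z) := by rw [← exp_nat_mul]; ring_nf
  have hD' : A + B * exp (-z) = exp (-z) * (A * exp z + B) := by rw [exp_neg]; field_simp
  rw [hD', inv_pow, mul_pow, mul_pow, hE]
  field_simp

/-- the Einstein system for `(F, C)`: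
`(C^{−1/2})'' = (1/4)C^{−1/2}` and `C^{1/2}·(F·(C^{−1/2})')' = (1/2)F'' − (3/4)F + 1`
on an open interval with `C > 0` forces the general Einstein solution
`F = 1 + (1/2)C₁e^{−2z} + C₂e^{−z} + C₃eᶻ + (1/2)C₄e^{2z}`,
`C = e^{−z}/(C₅ + C₆e^{−z})²` with `C₁C₅ − C₂C₆ = 0` and `C₃C₅ − C₄C₆ = 0`. -/
theorem einstein_system_solution (I : Set ℝ) (hIopen : IsOpen I)
    (hIconn : IsPreconnected I) (F C : ℝ → ℝ)
    (hF : ContDiffOn ℝ 2 F I) (hC : ContDiffOn ℝ 2 C I)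
    (hCpos : ∀ z ∈ I, 0 < C z)
    (h1 : ∀ z ∈ I, deriv (deriv (fun w => (Real.sqrt (C w))⁻¹)) z
        = (1/4) * (Real.sqrt (C z))⁻¹)
    (h2 : ∀ z ∈ I, Real.sqrt (C z) *
        deriv (fun w => F w * deriv (fun u => (Real.sqrt (C u))⁻¹) w) z
        = (1/2) * deriv (deriv F) z - (3/4) * F z + 1) :
    ∃ C₁ C₂ C₃ C₄ C₅ C₆ : ℝ,
      C₁ * C₅ - C₂ * C₆ = 0 ∧ C₃ * C₅ - C₄ * C₆ = 0 ∧
      ∀ z ∈ I,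
        F z = 1 + (1/2) * C₁ * exp (-2*z) + C₂ * exp (-z)
          + C₃ * exp z + (1/2) * C₄ * exp (2*z) ∧
        C z = exp (-z) / (C₅ + C₆ * exp (-z))^2 := by
  set g : ℝ → ℝ := fun w => (√(C w))⁻¹
  have hg_pos : ∀ z ∈ I, 0 < g z := fun z hz => inv_pos.2 (sqrt_pos.2 (hCpos z hz))
  have hg : ContDiffOn ℝ 2 g I :=
    (hC.sqrt fun z hz => (hCpos z hz).ne').inv fun z hz => (sqrt_pos.2 (hCpos z hz)).ne'
  have hg' : ∀ z ∈ I, HasDerivAt (deriv g) (1 / 4 * g z) z := fun z hz => by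
    simpa only [h1 z hz] using
      (hg.deriv_of_isOpen hIopen le_rfl).hasDerivAt_deriv one_ne_zero hIopen hz
  obtain ⟨C₅, C₆, hg_eq⟩ := exists_eq_exp_neg_half_mul_of_hasDerivAt hIopen hIconn
    (fun z hz => hg.hasDerivAt_deriv two_ne_zero hIopen hz) hg'
  have hD : ∀ z ∈ I, C₅ * exp z + C₆ ≠ 0 := fun z hz h => by
    simpa [(hg_eq z hz).1, h] using (hg_pos z hz).ne'
  have hF_ode : ∀ z ∈ I, HasDerivAt (deriv F)
      ((C₅ * exp z - C₆) / (C₅ * exp z + C₆) * deriv F z + 2 * (F z - 1)) z := fun z hz => by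
    have hF' := hF.hasDerivAt_deriv two_ne_zero hIopen hz
    have h := h2 z hz
    rw [(hF'.fun_mul (hg' z hz)).deriv, ← inv_inv √(C z)] at h
    change (g z)⁻¹ * _ = _ at h
    rw [(hg_eq z hz).1, (hg_eq z hz).2] at h
    have hF'' := (hF.deriv_of_isOpen hIopen le_rfl).hasDerivAt_deriv one_ne_zero hIopen hz
    refine hF''.congr_deriv ?_
    have := hD z hz
    field_simp at h ⊢
    linear_combination -h / 4
  obtain ⟨a, b, hF_eq⟩ := exists_eq_exp_combination_of_hasDerivAt (y := fun z => F z - 1)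
    hIopen hIconn hD (fun z hz => (hF.hasDerivAt_deriv two_ne_zero hIopen hz).sub_const 1) hF_ode
  refine ⟨b * C₆, b * C₅, a * C₆, a * C₅, C₅, C₆, by ring, by ring, fun z hz =>
    ⟨by linear_combination hF_eq z hz, ?_⟩⟩
  have hCg : C z = (g z)⁻¹ ^ 2 := by rw [inv_inv, sq_sqrt (hCpos z hz).le]
  rw [hCg, (hg_eq z hz).1, inv_sq_exp_neg_half_mul (hD z hz)]
end

section
/- Let C₁, C₂, C₃, C₄, C₅, C₆ ∈ ℝ satisfy C₁C₅ − C₂C₆ = 0 and C₃C₅ − C₄C₆ = 0, let I ⊆ ℝ be an open interval on which C₅ + C₆e^{−z} ≠ 0, and define F(z) = 1 + (1/2)C₁e^{−2z} + C₂e^{−z} + C₃e^{z} + (1/2)C₄e^{2z} and C(z) = e^{−z}/(C₅ + C₆e^{−z})². Then for every z ∈ I, −4C(z)^{−1}(F''(z) + (1/2)F(z) − 2) − 24C(z)^{−3/2}·(d/dz)(F(z)·(d/dz)√(C(z))) = −24(C₂C₅² − 2C₅C₆ + C₃C₆²). -/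
/-!
Write the conformal factor as `C = P⁻²` with `P = C₅ e^{z/2} + C₆ e^{-z/2}`. Where `P > 0` we have
`√C = P⁻¹` and `C^{-3/2} = P³`, so `C^{-3/2} (F (√C)')' = -(F' P' P + F (P'' P - 2 P'²))`, and
`P'' = P / 4`. The scalar curvature thereby becomes a Laurent polynomial in `e^{z/2}`, which the
relations `C₁C₅ = C₂C₆`, `C₃C₅ = C₄C₆` reduce to a constant. The case `P < 0` follows from
`P > 0` because `(C₅, C₆) ↦ (-C₅, -C₆)` changes neither `C` nor the constant.
-/

open Real Filter Topology

namespace EinsteinU2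

noncomputable def scalarCurvature (F C : ℝ → ℝ) (z : ℝ) : ℝ :=
  (-4) * (C z)⁻¹ * (iteratedDeriv 2 F z + (1/2) * F z - 2)
    - 24 * (C z) ^ (-(3/2) : ℝ) * deriv (fun w => F w * deriv (fun u => Real.sqrt (C u)) w) z

noncomputable def profile (C₁ C₂ C₃ C₄ z : ℝ) : ℝ :=
  1 + (1/2) * C₁ * exp (-2*z) + C₂ * exp (-z) + C₃ * exp z + (1/2) * C₄ * exp (2*z)

noncomputable def conformalInvSqrt (c₅ c₆ z : ℝ) : ℝ :=
  c₅ * exp (z / 2) + c₆ * exp (-(z / 2))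

theorem iteratedDeriv_two_eq_of_hasDerivAt {f f' : ℝ → ℝ} {z f'' : ℝ}
    (hf : ∀ w, HasDerivAt f (f' w) w) (hf' : HasDerivAt f' f'' z) :
    iteratedDeriv 2 f z = f'' := by
  rw [iteratedDeriv_succ, iteratedDeriv_one, funext fun w => (hf w).deriv, hf'.deriv]

theorem hasDerivAt_exp_const_mul (a z : ℝ) :
    HasDerivAt (fun x => exp (a * x)) (a * exp (a * z)) z := by
  simpa [mul_comm] using ((hasDerivAt_id z).const_mul a).exp

theorem hasDerivAt_profile (C₁ C₂ C₃ C₄ z : ℝ) :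
    HasDerivAt (profile C₁ C₂ C₃ C₄)
      (-C₁ * exp (-2*z) - C₂ * exp (-z) + C₃ * exp z + C₄ * exp (2*z)) z := by
  have h := (((((hasDerivAt_exp_const_mul (-2) z).const_mul ((1/2) * C₁)).const_add 1).add
    ((hasDerivAt_neg z).exp.const_mul C₂)).add ((hasDerivAt_exp z).const_mul C₃)).add
    ((hasDerivAt_exp_const_mul 2 z).const_mul ((1/2) * C₄))
  exact h.congr_deriv (by ring)

theorem iteratedDeriv_two_profile (C₁ C₂ C₃ C₄ z : ℝ) :
    iteratedDeriv 2 (profile C₁ C₂ C₃ C₄) z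
      = 2 * C₁ * exp (-2*z) + C₂ * exp (-z) + C₃ * exp z + 2 * C₄ * exp (2*z) := by
  refine iteratedDeriv_two_eq_of_hasDerivAt (hasDerivAt_profile C₁ C₂ C₃ C₄) ?_
  have h := (((((hasDerivAt_exp_const_mul (-2) z).const_mul (-C₁))).sub
    ((hasDerivAt_neg z).exp.const_mul C₂)).add ((hasDerivAt_exp z).const_mul C₃)).add
    ((hasDerivAt_exp_const_mul 2 z).const_mul C₄)
  exact h.congr_deriv (by ring)

theorem conformalInvSqrt_eq (c₅ c₆ z : ℝ) :
    conformalInvSqrt c₅ c₆ z = exp (z / 2) * (c₅ + c₆ * exp (-z)) := by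
  have h : exp (-(z / 2)) = exp (z / 2) * exp (-z) := by rw [← exp_add]; congr 1; ring
  rw [conformalInvSqrt, h]
  ring

theorem conformalInvSqrt_neg_neg (c₅ c₆ z : ℝ) :
    conformalInvSqrt (-c₅) (-c₆) z = -conformalInvSqrt c₅ c₆ z := by
  simp only [conformalInvSqrt]; ring

theorem div_sq_eq_inv_conformalInvSqrt_sq (c₅ c₆ z : ℝ) :
    exp (-z) / (c₅ + c₆ * exp (-z)) ^ 2 = (conformalInvSqrt c₅ c₆ z ^ 2)⁻¹ := by
  rw [conformalInvSqrt_eq, mul_pow, ← exp_nat_mul, exp_neg]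
  field_simp
  ring_nf

theorem hasDerivAt_conformalInvSqrt (c₅ c₆ z : ℝ) :
    HasDerivAt (conformalInvSqrt c₅ c₆) (conformalInvSqrt c₅ (-c₆) z / 2) z := by
  have h := (((hasDerivAt_id z).div_const 2).exp.const_mul c₅).add
    (((hasDerivAt_id z).div_const 2).neg.exp.const_mul c₆)
  exact h.congr_deriv (by simp only [conformalInvSqrt, id, Pi.neg_apply]; ring)

theorem rpow_neg_three_halves_inv_sq {p : ℝ} (hp : 0 < p) :
    ((p ^ 2)⁻¹) ^ (-(3/2) : ℝ) = p ^ 3 := by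
  rw [← rpow_natCast, ← rpow_neg hp.le, ← rpow_mul hp.le]; norm_num

theorem hasDerivAt_mul_deriv_sqrt_inv_sq {F P P' : ℝ → ℝ} {z f' p'' : ℝ}
    (hF : HasDerivAt F f' z) (hP : ∀ w, HasDerivAt P (P' w) w) (hP' : HasDerivAt P' p'' z)
    (hPz : 0 < P z) :
    HasDerivAt (fun w => F w * deriv (fun u => √((P u ^ 2)⁻¹)) w)
      (-(f' * P' z / P z ^ 2 + F z * (p'' * P z - 2 * P' z ^ 2) / P z ^ 3)) z := by
  have hpos : ∀ᶠ w in 𝓝 z, 0 < P w := continuousAt_const.eventually_lt (hP z).continuousAt hPz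
  have hderiv : ∀ᶠ w in 𝓝 z, deriv (fun u => √((P u ^ 2)⁻¹)) w = -P' w / P w ^ 2 := by
    filter_upwards [eventually_eventually_nhds.2 hpos] with w hw
    have hsqrt : (fun u => √((P u ^ 2)⁻¹)) =ᶠ[𝓝 w] P⁻¹ :=
      hw.mono fun u hu => by simp only [Pi.inv_apply]; rw [← inv_pow, sqrt_sq (inv_nonneg.2 hu.le)]
    rw [hsqrt.deriv_eq, ((hP w).inv hw.self_of_nhds.ne').deriv]
  have h : HasDerivAt (fun w => F w * (-P' w / P w ^ 2)) _ z :=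
    hF.mul (hP'.neg.div ((hP z).pow 2) (by positivity))
  refine (h.congr_of_eventuallyEq (hderiv.mono fun w hw => by simp only [hw])).congr_deriv ?_
  simp only [Pi.neg_apply, Nat.cast_ofNat]
  field_simp
  ring

theorem scalarCurvature_eq_of_pos {C₁ C₂ C₃ C₄ C₅ C₆ z : ℝ}
    (h1 : C₁ * C₅ - C₂ * C₆ = 0) (h2 : C₃ * C₅ - C₄ * C₆ = 0)
    (hz : 0 < conformalInvSqrt C₅ C₆ z) :
    scalarCurvature (profile C₁ C₂ C₃ C₄) (fun w => (conformalInvSqrt C₅ C₆ w ^ 2)⁻¹) z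
      = -24 * (C₂ * C₅^2 - 2 * C₅ * C₆ + C₃ * C₆^2) := by
  have hP' := (hasDerivAt_conformalInvSqrt C₅ (-C₆) z).div_const 2
  rw [neg_neg] at hP'
  rw [scalarCurvature, iteratedDeriv_two_profile, inv_inv, rpow_neg_three_halves_inv_sq hz,
    (hasDerivAt_mul_deriv_sqrt_inv_sq (hasDerivAt_profile ..)
      (hasDerivAt_conformalInvSqrt C₅ C₆) hP' hz).deriv]
  have ha : exp z = exp (z / 2) ^ 2 := by rw [← exp_nat_mul]; congr 1; push_cast; ring
  have ha2 : exp (2 * z) = exp (z / 2) ^ 4 := by rw [← exp_nat_mul]; congr 1; push_cast; ring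
  have hneg2 : -2 * z = -(2 * z) := by ring
  have hP0 : conformalInvSqrt C₅ C₆ z ≠ 0 := hz.ne'
  have ha0 : exp (z / 2) ≠ 0 := exp_ne_zero _
  simp only [profile, conformalInvSqrt, hneg2, exp_neg, ha, ha2] at hP0 ⊢
  generalize exp (z / 2) = a at ha0 hP0 ⊢
  field_simp at hP0
  have hD : C₅ * a ^ 2 + C₆ ≠ 0 := (div_ne_zero_iff.1 hP0).1
  linear_combination (norm := skip) (24 * a^2 * C₆) * h2 - (24 * (a^2)⁻¹ * C₅) * h1
  field_simp
  ring

end EinsteinU2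

open EinsteinU2

theorem einstein_scalar_curvature_const_general (C₁ C₂ C₃ C₄ C₅ C₆ : ℝ)
    (h1 : C₁ * C₅ - C₂ * C₆ = 0) (h2 : C₃ * C₅ - C₄ * C₆ = 0)
    (I : Set ℝ)
    (hI : ∀ z ∈ I, C₅ + C₆ * exp (-z) ≠ 0)
    (F C : ℝ → ℝ)
    (hFdef : ∀ z : ℝ, F z = 1 + (1/2) * C₁ * exp (-2*z) + C₂ * exp (-z)
      + C₃ * exp z + (1/2) * C₄ * exp (2*z))
    (hCdef : ∀ z : ℝ, C z = exp (-z) / (C₅ + C₆ * exp (-z))^2) :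
    ∀ z ∈ I,
      (-4) * (C z)⁻¹ * (iteratedDeriv 2 F z + (1/2) * F z - 2)
        - 24 * (C z) ^ (-(3/2) : ℝ) *
          deriv (fun w => F w * deriv (fun u => Real.sqrt (C u)) w) z
      = -24 * (C₂ * C₅^2 - 2 * C₅ * C₆ + C₃ * C₆^2) := by
  intro z hz
  change scalarCurvature F C z = _
  obtain rfl : F = profile C₁ C₂ C₃ C₄ := funext hFdef
  obtain rfl : C = fun w => (conformalInvSqrt C₅ C₆ w ^ 2)⁻¹ :=
    funext fun w => (hCdef w).trans (div_sq_eq_inv_conformalInvSqrt_sq C₅ C₆ w)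
  have hP : conformalInvSqrt C₅ C₆ z ≠ 0 := by
    rw [conformalInvSqrt_eq]; exact mul_ne_zero (exp_ne_zero _) (hI z hz)
  rcases hP.lt_or_gt with hneg | hpos
  · have h := scalarCurvature_eq_of_pos (C₁ := C₁) (C₂ := C₂) (C₃ := C₃) (C₄ := C₄)
      (C₅ := -C₅) (C₆ := -C₆) (z := z)
      (by linear_combination -h1) (by linear_combination -h2)
      (by rwa [conformalInvSqrt_neg_neg, neg_pos])
    simp only [conformalInvSqrt_neg_neg, neg_sq] at h
    linear_combination h
  · exact scalarCurvature_eq_of_pos h1 h2 hpos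

/-- for the general Einstein solution `(F, C)` the scalar curvature
`−4C⁻¹(F'' + (1/2)F − 2) − 24C^{−3/2}·(F·(√C)')'` is the constant
`−24(C₂C₅² − 2C₅C₆ + C₃C₆²)` on any open interval where `C₅ + C₆e^{−z} ≠ 0`. -/
theorem einstein_scalar_curvature_const (C₁ C₂ C₃ C₄ C₅ C₆ : ℝ)
    (h1 : C₁ * C₅ - C₂ * C₆ = 0) (h2 : C₃ * C₅ - C₄ * C₆ = 0)
    (I : Set ℝ) (hIopen : IsOpen I) (hIconn : IsPreconnected I)
    (hI : ∀ z ∈ I, C₅ + C₆ * exp (-z) ≠ 0)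
    (F C : ℝ → ℝ)
    (hFdef : ∀ z : ℝ, F z = 1 + (1/2) * C₁ * exp (-2*z) + C₂ * exp (-z)
      + C₃ * exp z + (1/2) * C₄ * exp (2*z))
    (hCdef : ∀ z : ℝ, C z = exp (-z) / (C₅ + C₆ * exp (-z))^2) :
    ∀ z ∈ I,
      (-4) * (C z)⁻¹ * (iteratedDeriv 2 F z + (1/2) * F z - 2)
        - 24 * (C z) ^ (-(3/2) : ℝ) *
          deriv (fun w => F w * deriv (fun u => Real.sqrt (C u)) w) z
      = -24 * (C₂ * C₅^2 - 2 * C₅ * C₆ + C₃ * C₆^2) :=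
  einstein_scalar_curvature_const_general C₁ C₂ C₃ C₄ C₅ C₆ h1 h2 I hI F C hFdef hCdef
end

section
/- Let k₁, k₂ ∈ ℝ, not both zero, let I ⊆ ℝ be an open interval on which k₂e^{3z} ≠ k₁, and let F : ℝ → ℝ be twice continuously differentiable on I. Then k₂e^{(3/2)z}·((1/2)F''(z) − (3/2)F'(z) + F(z) − 1) = k₁e^{−(3/2)z}·((1/2)F''(z) + (3/2)F'(z) + F(z) − 1) holds for all z ∈ I if and only if there exist constants C₁, C₂ ∈ ℝ such that F(z) = 1 + k₁((1/2)C₁e^{−2z} + C₂e^{−z}) + k₂(C₁e^{z} + (1/2)C₂e^{2z}) for all z ∈ I. -/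
/-!
Multiplying the equation by `2 e^{3z/2}` turns it into the linear equation
`a G'' + b G' + c G = 0` for `G = F - 1`, with `a = k₂e^{3z} - k₁`, `b = -3(k₂e^{3z} + k₁)`,
`c = 2(k₂e^{3z} - k₁)`, and `a ≠ 0` on `I`. It has the explicit solutions
`u₁ = ½k₁e^{-2z} + k₂e^z` and `u₂ = k₁e^{-z} + ½k₂e^{2z}`, whose Wronskian
`½e^{-3z}(k₂e^{3z} - k₁)²` does not vanish on `I`. Abel's identity `a W' = -b W` makes
`W(G, u₂) / W(u₁, u₂)` and `W(u₁, G) / W(u₁, u₂)` locally constant, hence constant on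
the connected set `I`, and Cramer's rule `G W(u₁, u₂) = W(G, u₂) u₁ + W(u₁, G) u₂` finishes.
-/

open Real

noncomputable def wronskian (f g : ℝ → ℝ) (z : ℝ) : ℝ := f z * deriv g z - deriv f z * g z

structure SolvesLinearODEOn (a b c : ℝ → ℝ) (I : Set ℝ) (y : ℝ → ℝ) : Prop where
  differentiableOn : DifferentiableOn ℝ y I
  differentiableOn_deriv : DifferentiableOn ℝ (deriv y) I
  ode : ∀ z ∈ I, a z * deriv (deriv y) z + b z * deriv y z + c z * y z = 0

namespace SolvesLinearODEOn

variable {a b c : ℝ → ℝ} {I : Set ℝ} {f g u v y w : ℝ → ℝ} {z : ℝ}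

lemma hasDerivAt (hy : SolvesLinearODEOn a b c I y) (hI : IsOpen I) (hz : z ∈ I) :
    HasDerivAt y (deriv y z) z :=
  (hy.differentiableOn.differentiableAt (hI.mem_nhds hz)).hasDerivAt

lemma hasDerivAt_deriv (hy : SolvesLinearODEOn a b c I y) (hI : IsOpen I) (hz : z ∈ I) :
    HasDerivAt (deriv y) (deriv (deriv y) z) z :=
  (hy.differentiableOn_deriv.differentiableAt (hI.mem_nhds hz)).hasDerivAt

lemma hasDerivAt_wronskian (hf : SolvesLinearODEOn a b c I f) (hg : SolvesLinearODEOn a b c I g)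
    (hI : IsOpen I) (ha : ∀ z ∈ I, a z ≠ 0) (hz : z ∈ I) :
    HasDerivAt (wronskian f g) (-(b z / a z) * wronskian f g z) z := by
  refine (((hf.hasDerivAt hI hz).mul (hg.hasDerivAt_deriv hI hz)).sub
    ((hf.hasDerivAt_deriv hI hz).mul (hg.hasDerivAt hI hz))).congr_deriv ?_
  field_simp [ha z hz]
  unfold wronskian
  linear_combination f z * hg.ode z hz - g z * hf.ode z hz

lemma hasDerivAt_wronskian_div (hf : SolvesLinearODEOn a b c I f)
    (hg : SolvesLinearODEOn a b c I g) (hu : SolvesLinearODEOn a b c I u)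
    (hv : SolvesLinearODEOn a b c I v) (hI : IsOpen I) (ha : ∀ z ∈ I, a z ≠ 0)
    (hW : wronskian u v z ≠ 0) (hz : z ∈ I) :
    HasDerivAt (fun z ↦ wronskian f g z / wronskian u v z) 0 z :=
  ((hf.hasDerivAt_wronskian hg hI ha hz).div
    (hu.hasDerivAt_wronskian hv hI ha hz) hW).congr_deriv (by ring)

lemma exists_wronskian_div_eq (hf : SolvesLinearODEOn a b c I f)
    (hg : SolvesLinearODEOn a b c I g) (hu : SolvesLinearODEOn a b c I u)
    (hv : SolvesLinearODEOn a b c I v) (hI : IsOpen I) (hI' : IsPreconnected I)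
    (ha : ∀ z ∈ I, a z ≠ 0) (hW : ∀ z ∈ I, wronskian u v z ≠ 0) :
    ∃ C, ∀ z ∈ I, wronskian f g z / wronskian u v z = C :=
  hI.exists_is_const_of_deriv_eq_zero hI'
    (fun z hz ↦ (hf.hasDerivAt_wronskian_div hg hu hv hI ha (hW z hz) hz).differentiableAt
      |>.differentiableWithinAt)
    (fun z hz ↦ (hf.hasDerivAt_wronskian_div hg hu hv hI ha (hW z hz) hz).deriv)

theorem exists_eq_add (hy : SolvesLinearODEOn a b c I y) (hu : SolvesLinearODEOn a b c I u)
    (hv : SolvesLinearODEOn a b c I v) (hI : IsOpen I) (hI' : IsPreconnected I)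
    (ha : ∀ z ∈ I, a z ≠ 0) (hW : ∀ z ∈ I, wronskian u v z ≠ 0) :
    ∃ C₁ C₂ : ℝ, ∀ z ∈ I, y z = C₁ * u z + C₂ * v z := by
  obtain ⟨C₁, h₁⟩ := hy.exists_wronskian_div_eq hv hu hv hI hI' ha hW
  obtain ⟨C₂, h₂⟩ := hu.exists_wronskian_div_eq hy hu hv hI hI' ha hW
  refine ⟨C₁, C₂, fun z hz ↦ ?_⟩
  rw [← h₁ z hz, ← h₂ z hz]
  field_simp [hW z hz]
  unfold wronskian
  ring

lemma const_mul (hy : SolvesLinearODEOn a b c I y) (C : ℝ) :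
    SolvesLinearODEOn a b c I (fun z ↦ C * y z) where
  differentiableOn := hy.differentiableOn.const_mul C
  differentiableOn_deriv := by
    rw [deriv_const_mul_field']
    exact hy.differentiableOn_deriv.const_mul C
  ode z hz := by
    simp only [deriv_const_mul_field']
    linear_combination C * hy.ode z hz

lemma add (hy : SolvesLinearODEOn a b c I y) (hw : SolvesLinearODEOn a b c I w)
    (hI : IsOpen I) :
    SolvesLinearODEOn a b c I (fun z ↦ y z + w z) := by
  have hd : I.EqOn (deriv fun z ↦ y z + w z) (fun z ↦ deriv y z + deriv w z) := fun z hz ↦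
    ((hy.hasDerivAt hI hz).add (hw.hasDerivAt hI hz)).deriv
  refine ⟨hy.differentiableOn.add hw.differentiableOn,
    (hy.differentiableOn_deriv.add hw.differentiableOn_deriv).congr hd, fun z hz ↦ ?_⟩
  have hd₂ : deriv (fun z ↦ deriv y z + deriv w z) z = deriv (deriv y) z + deriv (deriv w) z :=
    ((hy.hasDerivAt_deriv hI hz).add (hw.hasDerivAt_deriv hI hz)).deriv
  rw [hd.deriv hI hz, hd hz, hd₂]
  linear_combination hy.ode z hz + hw.ode z hz

lemma congr (hy : SolvesLinearODEOn a b c I y) (hI : IsOpen I) (h : I.EqOn w y) :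
    SolvesLinearODEOn a b c I w where
  differentiableOn := hy.differentiableOn.congr h
  differentiableOn_deriv := hy.differentiableOn_deriv.congr (h.deriv hI)
  ode z hz := by rw [(h.deriv hI).deriv hI hz, h.deriv hI hz, h hz]; exact hy.ode z hz

end SolvesLinearODEOn

noncomputable def expPair (α β l m : ℝ) (z : ℝ) : ℝ := α * exp (l * z) + β * exp (m * z)

lemma hasDerivAt_expPair (α β l m z : ℝ) :
    HasDerivAt (expPair α β l m) (expPair (α * l) (β * m) l m z) z := by
  have hexp (r : ℝ) : HasDerivAt (fun x ↦ exp (r * x)) (exp (r * z) * r) z := by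
    simpa using ((hasDerivAt_id z).const_mul r).exp
  exact (((hexp l).const_mul α).add ((hexp m).const_mul β)).congr_deriv
    (by simp only [expPair]; ring)

lemma differentiable_expPair (α β l m : ℝ) : Differentiable ℝ (expPair α β l m) :=
  fun z ↦ (hasDerivAt_expPair α β l m z).differentiableAt

lemma deriv_expPair (α β l m : ℝ) : deriv (expPair α β l m) = expPair (α * l) (β * m) l m :=
  funext fun z ↦ (hasDerivAt_expPair α β l m z).deriv

lemma solvesLinearODEOn_expPair {a b c : ℝ → ℝ} {I : Set ℝ} {α β l m : ℝ}
    (h : ∀ z ∈ I, a z * expPair (α * l * l) (β * m * m) l m z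
      + b z * expPair (α * l) (β * m) l m z + c z * expPair α β l m z = 0) :
    SolvesLinearODEOn a b c I (expPair α β l m) where
  differentiableOn := (differentiable_expPair α β l m).differentiableOn
  differentiableOn_deriv := by
    rw [deriv_expPair]
    exact (differentiable_expPair _ _ l m).differentiableOn
  ode := by simpa only [deriv_expPair] using h

abbrev SolvesHarmonicWeylOn (k₁ k₂ : ℝ) : Set ℝ → (ℝ → ℝ) → Prop :=
  SolvesLinearODEOn (fun z ↦ k₂ * exp (3 * z) - k₁)
    (fun z ↦ -3 * (k₂ * exp (3 * z) + k₁)) (fun z ↦ 2 * (k₂ * exp (3 * z) - k₁))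

lemma harmonicWeyl_eq_iff (k₁ k₂ z p q r : ℝ) :
    k₂ * exp ((3/2)*z) * ((1/2) * p - (3/2) * q + r - 1)
        = k₁ * exp (-(3/2)*z) * ((1/2) * p + (3/2) * q + r - 1) ↔
      (k₂ * exp (3 * z) - k₁) * p + -3 * (k₂ * exp (3 * z) + k₁) * q
        + 2 * (k₂ * exp (3 * z) - k₁) * (r - 1) = 0 := by
  have hs : exp ((3/2)*z) ≠ 0 := exp_ne_zero _
  have hsq : exp (3 * z) = exp ((3/2)*z) ^ 2 := by rw [← exp_nat_mul]; ring_nf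
  have hinv : exp (-(3/2)*z) = (exp ((3/2)*z))⁻¹ := by rw [← exp_neg]; ring_nf
  rw [hsq, hinv]
  generalize exp ((3/2)*z) = s at hs ⊢
  field_simp
  constructor <;> intro h <;> linear_combination h

lemma solvesHarmonicWeylOn_expPair_neg_two_one (k₁ k₂ : ℝ) (I : Set ℝ) :
    SolvesHarmonicWeylOn k₁ k₂ I (expPair (k₁ / 2) k₂ (-2) 1) := by
  refine solvesLinearODEOn_expPair fun z _ ↦ ?_
  have h : exp (3 * z) * exp (-2 * z) = exp (1 * z) := by rw [← exp_add]; ring_nf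
  simp only [expPair]
  linear_combination 6 * k₁ * k₂ * h

lemma solvesHarmonicWeylOn_expPair_neg_one_two (k₁ k₂ : ℝ) (I : Set ℝ) :
    SolvesHarmonicWeylOn k₁ k₂ I (expPair k₁ (k₂ / 2) (-1) 2) := by
  refine solvesLinearODEOn_expPair fun z _ ↦ ?_
  have h : exp (3 * z) * exp (-1 * z) = exp (2 * z) := by rw [← exp_add]; ring_nf
  simp only [expPair]
  linear_combination 6 * k₁ * k₂ * h

lemma wronskian_expPair (k₁ k₂ z : ℝ) :
    2 * exp (3 * z) * wronskian (expPair (k₁ / 2) k₂ (-2) 1) (expPair k₁ (k₂ / 2) (-1) 2) z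
      = (k₂ * exp (3 * z) - k₁) ^ 2 := by
  have hx : exp z ≠ 0 := exp_ne_zero z
  have e (n : ℕ) : exp (n * z) = exp z ^ n := exp_nat_mul z n
  have e₁ : exp (1 * z) = exp z := by rw [one_mul]
  have e₂ : exp (2 * z) = exp z ^ 2 := by exact_mod_cast e 2
  have e₃ : exp (3 * z) = exp z ^ 3 := by exact_mod_cast e 3
  have em₁ : exp (-1 * z) = (exp z)⁻¹ := by rw [neg_one_mul, exp_neg]
  have em₂ : exp (-2 * z) = (exp z ^ 2)⁻¹ := by rw [neg_mul, exp_neg, e₂]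
  simp only [wronskian, deriv_expPair, expPair]
  rw [e₁, e₂, e₃, em₁, em₂]
  field_simp
  ring

lemma wronskian_expPair_ne_zero {k₁ k₂ z : ℝ} (h : k₂ * exp (3 * z) ≠ k₁) :
    wronskian (expPair (k₁ / 2) k₂ (-2) 1) (expPair k₁ (k₂ / 2) (-1) 2) z ≠ 0 := by
  intro hW
  have := wronskian_expPair k₁ k₂ z
  rw [hW, mul_zero, eq_comm, sq_eq_zero_iff, sub_eq_zero] at this
  exact h this

lemma harmonicWeyl_iff_solvesHarmonicWeylOn {k₁ k₂ : ℝ} {I : Set ℝ} (hI : IsOpen I)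
    {F : ℝ → ℝ} (hF : ContDiffOn ℝ 2 F I) :
    (∀ z ∈ I,
      k₂ * exp ((3/2)*z) * ((1/2) * deriv (deriv F) z - (3/2) * deriv F z + F z - 1)
        = k₁ * exp (-(3/2)*z) * ((1/2) * deriv (deriv F) z + (3/2) * deriv F z + F z - 1)) ↔
      SolvesHarmonicWeylOn k₁ k₂ I (fun z ↦ F z - 1) := by
  have hd : deriv (fun z ↦ F z - 1) = deriv F := deriv_sub_const_fun 1
  refine ⟨fun h ↦ ⟨(hF.differentiableOn (by norm_num)).sub_const 1, ?_, fun z hz ↦ ?_⟩,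
    fun h z hz ↦ ?_⟩
  · rw [hd]
    exact (hF.deriv_of_isOpen hI (by norm_num)).differentiableOn one_ne_zero
  · rw [hd]
    exact (harmonicWeyl_eq_iff _ _ _ _ _ _).1 (h z hz)
  · have := h.ode z hz
    rw [hd] at this
    exact (harmonicWeyl_eq_iff _ _ _ _ _ _).2 this

theorem harmonicWeyl_ode_iff_general (k₁ k₂ : ℝ)
    (I : Set ℝ) (hIopen : IsOpen I) (hIconn : IsPreconnected I)
    (hI : ∀ z ∈ I, k₂ * exp (3*z) ≠ k₁)
    (F : ℝ → ℝ) (hF : ContDiffOn ℝ 2 F I) :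
    (∀ z ∈ I,
      k₂ * exp ((3/2)*z) * ((1/2) * deriv (deriv F) z - (3/2) * deriv F z + F z - 1)
        = k₁ * exp (-(3/2)*z) * ((1/2) * deriv (deriv F) z + (3/2) * deriv F z + F z - 1)) ↔
    (∃ C₁ C₂ : ℝ, ∀ z ∈ I,
      F z = 1 + k₁ * ((1/2) * C₁ * exp (-2*z) + C₂ * exp (-z))
        + k₂ * (C₁ * exp z + (1/2) * C₂ * exp (2*z))) := by
  have hu₁ := solvesHarmonicWeylOn_expPair_neg_two_one k₁ k₂ I
  have hu₂ := solvesHarmonicWeylOn_expPair_neg_one_two k₁ k₂ I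
  have hexpPair (C₁ C₂ z : ℝ) :
      C₁ * expPair (k₁ / 2) k₂ (-2) 1 z + C₂ * expPair k₁ (k₂ / 2) (-1) 2 z
        = k₁ * ((1/2) * C₁ * exp (-2*z) + C₂ * exp (-z))
          + k₂ * (C₁ * exp z + (1/2) * C₂ * exp (2*z)) := by
    simp only [expPair]
    ring_nf
  rw [harmonicWeyl_iff_solvesHarmonicWeylOn hIopen hF]
  constructor
  · intro hy
    obtain ⟨C₁, C₂, h⟩ := hy.exists_eq_add hu₁ hu₂ hIopen hIconn
      (fun z hz ↦ sub_ne_zero.2 (hI z hz)) (fun z hz ↦ wronskian_expPair_ne_zero (hI z hz))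
    exact ⟨C₁, C₂, fun z hz ↦ by linear_combination h z hz + hexpPair C₁ C₂ z⟩
  · rintro ⟨C₁, C₂, h⟩
    exact ((hu₁.const_mul C₁).add (hu₂.const_mul C₂) hIopen).congr hIopen fun z hz ↦ by
      simp only [h z hz, hexpPair]
      ring

/-- the harmonic-Weyl ODE
`k₂e^{(3/2)z}(ℒ⁺F − 1) = k₁e^{−(3/2)z}(ℒ⁻F − 1)` on an open interval where
`k₂e^{3z} ≠ k₁` (with `k₁, k₂` not both zero) holds iff
`F(z) = 1 + k₁((1/2)C₁e^{−2z} + C₂e^{−z}) + k₂(C₁eᶻ + (1/2)C₂e^{2z})` for constants. -/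
theorem harmonicWeyl_ode_iff (k₁ k₂ : ℝ) (hk : ¬(k₁ = 0 ∧ k₂ = 0))
    (I : Set ℝ) (hIopen : IsOpen I) (hIconn : IsPreconnected I)
    (hI : ∀ z ∈ I, k₂ * exp (3*z) ≠ k₁)
    (F : ℝ → ℝ) (hF : ContDiffOn ℝ 2 F I) :
    (∀ z ∈ I,
      k₂ * exp ((3/2)*z) * ((1/2) * deriv (deriv F) z - (3/2) * deriv F z + F z - 1)
        = k₁ * exp (-(3/2)*z) * ((1/2) * deriv (deriv F) z + (3/2) * deriv F z + F z - 1)) ↔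
    (∃ C₁ C₂ : ℝ, ∀ z ∈ I,
      F z = 1 + k₁ * ((1/2) * C₁ * exp (-2*z) + C₂ * exp (-z))
        + k₂ * (C₁ * exp z + (1/2) * C₂ * exp (2*z))) :=
  harmonicWeyl_ode_iff_general k₁ k₂ I hIopen hIconn hI F hF
end

section
/- For every x ∈ ℝ, 2(1 + 2cosh x)·sinh x = 2cosh x + cosh 2x if and only if e^{4x} − 4e^{x} − 3 = 0. Moreover, there is exactly one real number x with e^{4x} − 4e^{x} − 3 = 0, and this x is positive. -/
/-!
Multiplying the hyperbolic equation out in `u = eˣ` turns it into `u⁴ - 4u - 3 = 0`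
(up to the positive factor `2u²`). A positive root of this quartic satisfies `u > 1`,
since `u⁴ ≤ 1 < 4u + 3` for `u ≤ 1`, and on `[1, ∞)` the quartic is strictly increasing;
as it changes sign on `[1, e]`, it has exactly one root there.
-/

open Real Set

lemma exp_four_mul (x : ℝ) : exp (4 * x) = exp x ^ 4 := by
  exact_mod_cast exp_nat_mul x 4

lemma two_mul_one_add_two_mul_cosh_mul_sinh_sub (x : ℝ) :
    2 * (1 + 2 * cosh x) * sinh x - (2 * cosh x + cosh (2 * x))
      = (exp (4 * x) - 4 * exp x - 3) / (2 * exp (2 * x)) := by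
  have hu : exp x ≠ 0 := (exp_pos x).ne'
  have h2 : exp (2 * x) = exp x ^ 2 := by exact_mod_cast exp_nat_mul x 2
  rw [cosh_eq, cosh_eq, sinh_eq, exp_neg, exp_neg, h2, exp_four_mul]
  field_simp
  ring

lemma strictMonoOn_pow_four_sub_four_mul :
    StrictMonoOn (fun u : ℝ => u ^ 4 - 4 * u) (Ici 1) := by
  intro a (ha : 1 ≤ a) b _ hab
  have hsum : 4 < b ^ 3 + b ^ 2 * a + b * a ^ 2 + a ^ 3 := by
    have : 1 < b := ha.trans_lt hab
    nlinarith [one_le_pow₀ (n := 3) ha, one_le_pow₀ (n := 2) ha,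
      one_lt_pow₀ this (n := 3) (by norm_num), one_lt_pow₀ this (n := 2) (by norm_num)]
  have hab' : 0 < b - a := sub_pos.mpr hab
  show a ^ 4 - 4 * a < b ^ 4 - 4 * b
  nlinarith [mul_lt_mul_of_pos_left hsum hab']

lemma strictMonoOn_exp_four_mul_sub :
    StrictMonoOn (fun x => exp (4 * x) - 4 * exp x - 3) (Ici 0) := by
  intro a (ha : 0 ≤ a) b (hb : 0 ≤ b) hab
  have := strictMonoOn_pow_four_sub_four_mul (one_le_exp ha) (one_le_exp hb)
    (exp_lt_exp.mpr hab)
  simp only [exp_four_mul] at this ⊢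
  linarith

lemma exp_four_mul_sub_neg_of_nonpos {x : ℝ} (hx : x ≤ 0) :
    exp (4 * x) - 4 * exp x - 3 < 0 := by
  have h1 : exp x ≤ 1 := exp_le_one_iff.mpr hx
  have h4 : exp x ^ 4 ≤ 1 := pow_le_one₀ (exp_pos x).le h1
  rw [exp_four_mul]
  linarith [exp_pos x]

lemma exists_exp_four_mul_sub_eq_zero :
    ∃ x ∈ Icc (0 : ℝ) 1, exp (4 * x) - 4 * exp x - 3 = 0 := by
  have he : 2 ≤ exp 1 := by linarith [add_one_le_exp 1]
  have hf1 : 0 ≤ exp (4 * 1) - 4 * exp 1 - 3 := by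
    rw [exp_four_mul]
    nlinarith [pow_le_pow_left₀ (by norm_num) he 3]
  have hf0 : exp (4 * 0) - 4 * exp 0 - 3 ≤ 0 := (exp_four_mul_sub_neg_of_nonpos le_rfl).le
  exact intermediate_value_Icc (zero_le_one' ℝ) (by fun_prop) ⟨hf0, hf1⟩

/-- `2(1 + 2cosh x)·sinh x = 2cosh x + cosh 2x` iff
`e^{4x} − 4eˣ − 3 = 0`; moreover there is exactly one real root of
`e^{4x} − 4eˣ − 3 = 0`, and it is positive. -/
theorem page_parameter_equation :
    (∀ x : ℝ,
      2 * (1 + 2 * Real.cosh x) * Real.sinh x = 2 * Real.cosh x + Real.cosh (2*x) ↔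
      exp (4*x) - 4 * exp x - 3 = 0) ∧
    (∃ x : ℝ, 0 < x ∧ exp (4*x) - 4 * exp x - 3 = 0 ∧
      ∀ y : ℝ, exp (4*y) - 4 * exp y - 3 = 0 → y = x) := by
  have pos_of_root {x : ℝ} (hx : exp (4 * x) - 4 * exp x - 3 = 0) : 0 < x := by
    by_contra! h
    linarith [exp_four_mul_sub_neg_of_nonpos h]
  refine ⟨fun x => ?_, ?_⟩
  · rw [← sub_eq_zero, two_mul_one_add_two_mul_cosh_mul_sinh_sub, div_eq_zero_iff,
      or_iff_left (by positivity)]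
  · obtain ⟨c, -, hc⟩ := exists_exp_four_mul_sub_eq_zero
    refine ⟨c, pos_of_root hc, hc, fun y hy => ?_⟩
    exact strictMonoOn_exp_four_mul_sub.injOn (pos_of_root hy).le (pos_of_root hc).le
      (hy.trans hc.symm)
end
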